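/- In a p-equipped poset 𝒫 with 0 a minimal strong point, suppose that in the Hasse diagram there is exactly one arrow i → j out of i, and that for all u ≥ j one has i ≤^ℓ u if and only if j ≤^ℓ u. If moreover i ≤^ℓ j with the above compatibility (so ℓ ∈ {1, p}), then for every u ≥ j: dim_F(e_iΛ^{(c)}e_u) = dim_F(e_jΛ^{(c)}e_u), and consequently rad(e_iΛ^{(c)}) ≅ e_jΛ^{(c)} as right Λ^{(c)}-modules. -/

import Mathlib

/-!
Since `i → j` is the only arrow out of `i`, the columns `t > i` are exactly the columns `t ≥ j`,
and there `ℛ^{(c)}_{i,t} = ℛ^{(c)}_{j,t}` because `e i t = e j t`. So left multiplication by the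
matrix unit `e_{j,i}` moves row `i` to row `j`: it maps `rad(e_iΛ^{(c)})` bijectively onto
`e_jΛ^{(c)}`, with inverse left multiplication by `e_{i,j}`, and being a left multiplication it
commutes with right multiplication by `Λ^{(c)}`.
-/

section LambdaC

variable {P : Type*} [Fintype P] [DecidableEq P] [PartialOrder P]
  [DecidableRel ((· ≤ ·) : P → P → Prop)]
variable {F G : Type*} [Field F] [Field G] [Algebra F G]

/-- The subspace `ℛ^{(c)}_{x,y} = F⟨1, ξ, …, ξ^{ℓ-1}⟩ ⊆ G` attached to a relation
`x ≤^ℓ y` of a `p`-equipped poset. -/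
def Rc (e : P → P → ℕ) (ξ : G) (x y : P) : Submodule F G :=
  Submodule.span F {g : G | ∃ k : ℕ, k < e x y ∧ g = ξ ^ k}

/-- The underlying set of the algebra `Λ^{(c)}`. -/
def lambdaCSet (e : P → P → ℕ) (ξ : G) : Set (Matrix P P G) :=
  {M | ∀ a c : P, (a ≤ c → M a c ∈ (Rc (F := F) e ξ a c)) ∧ (¬ a ≤ c → M a c = 0)}

/-- The set underlying the projective right module `e_jΛ^{(c)}`: matrices supported
on row `j`, with entries in `ℛ^{(c)}_{j,t}` for `j ≤ t`. -/
def rowSet (e : P → P → ℕ) (ξ : G) (j : P) : Set (Matrix P P G) :=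
  {M | ∀ a c : P,
    ((a = j ∧ j ≤ c) → M a c ∈ (Rc (F := F) e ξ j c)) ∧ (¬ (a = j ∧ j ≤ c) → M a c = 0)}

/-- The set underlying `rad(e_iΛ^{(c)}) = ⊕_{i < t} e_{i,t} ℛ^{(c)}_{i,t}`. -/
def radRowSet (e : P → P → ℕ) (ξ : G) (i : P) : Set (Matrix P P G) :=
  {M | ∀ a c : P,
    ((a = i ∧ i < c) → M a c ∈ (Rc (F := F) e ξ i c)) ∧ (¬ (a = i ∧ i < c) → M a c = 0)}

namespace Matrix

variable {ι R A : Type*} [Semiring R]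

section AddCommMonoid

variable [AddCommMonoid A] [Module R A]

def singleRowSet (r : ι) (S : Set ι) (V : ι → Submodule R A) : Set (Matrix ι ι A) :=
  {M | ∀ a c : ι, (a = r ∧ c ∈ S → M a c ∈ V c) ∧ (¬ (a = r ∧ c ∈ S) → M a c = 0)}

theorem singleRowSet_congr {r : ι} {S : Set ι} {V V' : ι → Submodule R A}
    (h : ∀ c ∈ S, V c = V' c) : singleRowSet r S V = singleRowSet r S V' := by
  ext M
  refine forall₂_congr fun a c => and_congr_left fun _ => imp_congr_right fun hac => ?_
  rw [h c hac.2]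

end AddCommMonoid

variable [Semiring A] [Module R A] [Fintype ι] [DecidableEq ι]

theorem single_one_mul_apply (r' r a c : ι) (M : Matrix ι ι A) :
    (single r' r (1 : A) * M) a c = if a = r' then M r c else 0 := by
  split_ifs with h
  · rw [h, single_mul_apply_same, one_mul]
  · exact single_mul_apply_of_ne _ _ _ _ _ h M

theorem single_one_mul_eq_self {r : ι} {M : Matrix ι ι A} (hM : ∀ a c, a ≠ r → M a c = 0) :
    single r r (1 : A) * M = M := by
  ext a c
  rw [single_one_mul_apply]
  split_ifs with h
  · rw [h]
  · exact (hM a c h).symm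

theorem mapsTo_single_one_mul_singleRowSet (r r' : ι) (S : Set ι) (V : ι → Submodule R A) :
    Set.MapsTo (single r' r (1 : A) * ·) (singleRowSet r S V) (singleRowSet r' S V) := by
  intro M hM a c
  simp only [single_one_mul_apply]
  constructor
  · rintro ⟨rfl, hc⟩
    exact if_pos rfl ▸ (hM r c).1 ⟨rfl, hc⟩
  · intro h
    split_ifs with ha
    · exact (hM r c).2 fun h' => h ⟨ha, h'.2⟩
    · rfl

theorem leftInvOn_single_one_mul_singleRowSet (r r' : ι) (S : Set ι) (V : ι → Submodule R A) :
    Set.LeftInvOn (single r r' (1 : A) * ·) (single r' r (1 : A) * ·) (singleRowSet r S V) := by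
  intro M hM
  simp only [← Matrix.mul_assoc, single_mul_single_same, one_mul]
  exact single_one_mul_eq_self fun a c ha => (hM a c).2 fun h => ha h.1

theorem bijOn_single_one_mul_singleRowSet (r r' : ι) (S : Set ι) (V : ι → Submodule R A) :
    Set.BijOn (single r' r (1 : A) * ·) (singleRowSet r S V) (singleRowSet r' S V) :=
  Set.InvOn.bijOn
    ⟨leftInvOn_single_one_mul_singleRowSet r r' S V,
      leftInvOn_single_one_mul_singleRowSet r' r S V⟩
    (mapsTo_single_one_mul_singleRowSet r r' S V) (mapsTo_single_one_mul_singleRowSet r' r S V)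

end Matrix

theorem Rc_congr {ι : Type*} {e : ι → ι → ℕ} {ξ : G} {x y u : ι} (h : e x u = e y u) :
    Rc (F := F) e ξ x u = Rc (F := F) e ξ y u := by
  rw [Rc, Rc, h]

theorem rowSet_eq_singleRowSet {ι : Type*} [PartialOrder ι] (e : ι → ι → ℕ) (ξ : G) (j : ι) :
    rowSet (F := F) e ξ j = Matrix.singleRowSet j (Set.Ici j) (Rc (F := F) e ξ j) :=
  rfl

theorem radRowSet_eq_singleRowSet {ι : Type*} [PartialOrder ι] {e : ι → ι → ℕ} (ξ : G) {i j : ι}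
    (harrow : i < j ∧ ∀ k : ι, i < k → j ≤ k) (hcompat : ∀ u : ι, j ≤ u → e i u = e j u) :
    radRowSet (F := F) e ξ i = Matrix.singleRowSet i (Set.Ici j) (Rc (F := F) e ξ j) := by
  have hIoi : Set.Ioi i = Set.Ici j :=
    Set.ext fun k => ⟨harrow.2 k, harrow.1.trans_le⟩
  change Matrix.singleRowSet i (Set.Ioi i) (Rc (F := F) e ξ i) = _
  rw [hIoi]
  exact Matrix.singleRowSet_congr fun u hu => Rc_congr (hcompat u hu)

theorem rad_proj_iso_general
    (e : P → P → ℕ)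
    (ξ : G)
    (i j : P)
    (harrow : i < j ∧ ∀ k : P, i < k → j ≤ k)
    (hcompat : ∀ u : P, j ≤ u → e i u = e j u) :
    (∀ u : P, j ≤ u →
      Module.finrank F ↥(Rc (F := F) e ξ i u) = Module.finrank F ↥(Rc (F := F) e ξ j u)) ∧
    ∃ φ : Matrix P P G →ₗ[F] Matrix P P G,
      Set.BijOn φ (radRowSet (F := F) e ξ i) (rowSet (F := F) e ξ j) ∧
      ∀ v ∈ radRowSet (F := F) e ξ i, ∀ m ∈ lambdaCSet (F := F) e ξ,
        φ (v * m) = φ v * m := by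
  refine ⟨fun u hu => by rw [Rc_congr (hcompat u hu)],
    LinearMap.mulLeft F (Matrix.single j i 1), ?_, fun v _ m _ => (Matrix.mul_assoc _ v m).symm⟩
  rw [radRowSet_eq_singleRowSet ξ harrow hcompat, rowSet_eq_singleRowSet]
  exact Matrix.bijOn_single_one_mul_singleRowSet i j _ _

/-- In a `p`-equipped poset `𝒫`, suppose `i → j` is the only arrow out of `i` in the
Hasse diagram and for all `u ≥ j` one has `i ≤^ℓ u ↔ j ≤^ℓ u` (so `i ≤^ℓ j` with
`ℓ ∈ {1, p}`).  Then for every `u ≥ j`, `dim_F (e_iΛ^{(c)}e_u) = dim_F (e_jΛ^{(c)}e_u)`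
and consequently `rad(e_iΛ^{(c)}) ≅ e_jΛ^{(c)}` as right `Λ^{(c)}`-modules. -/
theorem rad_proj_iso
    (p : ℕ) (hp : p.Prime)
    (e : P → P → ℕ)
    (hrange : ∀ x y : P, x ≤ y → 1 ≤ e x y ∧ e x y ≤ p)
    (haxiom : ∀ x y z : P, x ≤ y → y ≤ z → min (e x y + e y z - 1) p ≤ e x z)
    (q : F) (ξ : G) (hξ : ξ ^ p = algebraMap F G q)
    (b : Module.Basis (Fin p) F G) (hb : ∀ k : Fin p, b k = ξ ^ (k : ℕ))
    (i j : P)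
    (harrow : i < j ∧ ∀ k : P, i < k → j ≤ k)
    (hcompat : ∀ u : P, j ≤ u → e i u = e j u)
    (hℓ : e i j = 1 ∨ e i j = p) :
    (∀ u : P, j ≤ u →
      Module.finrank F ↥(Rc (F := F) e ξ i u) = Module.finrank F ↥(Rc (F := F) e ξ j u)) ∧
    ∃ φ : Matrix P P G →ₗ[F] Matrix P P G,
      Set.BijOn φ (radRowSet (F := F) e ξ i) (rowSet (F := F) e ξ j) ∧
      ∀ v ∈ radRowSet (F := F) e ξ i, ∀ m ∈ lambdaCSet (F := F) e ξ,
        φ (v * m) = φ v * m :=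
  rad_proj_iso_general e ξ i j harrow hcompat

end LambdaC
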